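/- arXiv:2111.11409 — 2 statements merged into one kernel-verified Lean document; each statement's English description precedes it below -/
import Mathlib

section
/- Let U, U', W, W' be varieties over a field k and let W → W', W → U, f : W' → U', φ : U → U' form a Cartesian square (W = U ×_{U'} W') with φ smooth. Let S be a subset of U', and for each u ∈ S let L_u be a finite field extension of the residue field κ(u), such that: (i) the fiber of φ at every point u ∉ S is split; (ii) for each u ∈ S, the base change φ⁻¹(u) ×_{κ(u)} L_u is a split L_u-scheme; and (iii) for every w ∈ W' with f(w) ∈ S, there exists an embedding of κ(f(w))-extensions L_{f(w)} ↪ κ(w). Then the projection W → W' is smooth with split fibers. -/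
/-!
Common definitions used to formalize the paper
"Weak weak approximation for del Pezzo surfaces of low degree" (arXiv:2111.11409).
-/

open AlgebraicGeometry CategoryTheory CategoryTheory.Limits TopologicalSpace

noncomputable section

namespace Paper

/-- `Spec` of a plain commutative ring. -/
abbrev SpecF (R : Type) [CommRing R] : Scheme := Spec (CommRingCat.of R)

attribute [local instance] MvPolynomial.gradedAlgebra

/-- Projective `n`-space over `k`, as `Proj k[x₀, …, xₙ]`. -/
abbrev ProjSpace (k : Type) [CommRing k] (n : ℕ) : Scheme :=
  Proj (MvPolynomial.homogeneousSubmodule (Fin (n + 1)) k)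

/-- The projective line over `k`. -/
abbrev P1 (k : Type) [CommRing k] : Scheme := ProjSpace k 1

/-- The structure morphism `ℙⁿ_k ⟶ Spec k`. -/
def ProjSpace.structMor (k : Type) [CommRing k] (n : ℕ) : ProjSpace k n ⟶ SpecF k :=
  Proj.toSpecZero _ ≫ Spec.map (CommRingCat.ofHom (algebraMap k _))

/-- The scheme-theoretic fiber of a morphism `f : X ⟶ Y` over a point `y : Y`,
i.e. the pullback of `f` along the canonical `Spec κ(y) ⟶ Y`. -/
def fiberAt {X Y : Scheme} (f : X ⟶ Y) (y : Y) : Scheme :=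
  pullback f (Y.fromSpecResidueField y)

/-- The structure morphism of the fiber, to `Spec κ(y)`. -/
def fiberStruct {X Y : Scheme} (f : X ⟶ Y) (y : Y) :
    fiberAt f y ⟶ SpecF (Y.residueField y) :=
  pullback.snd _ _

/-- The inclusion of the fiber in the total space. -/
def fiberIncl {X Y : Scheme} (f : X ⟶ Y) (y : Y) : fiberAt f y ⟶ X :=
  pullback.fst _ _

/-- A scheme `X` over a field `k` is geometrically integral if it stays integral
after arbitrary field extensions of `k`. -/
def GeometricallyIntegral (k : Type) [Field k] (X : Scheme) (p : X ⟶ SpecF k) : Prop :=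
  ∀ (F : Type) (_ : Field F) (i : k →+* F),
    IsIntegral (pullback p (Spec.map (CommRingCat.ofHom i)))

/-- A scheme over a field `k` is *split* if it contains a nonempty geometrically
integral open subscheme. -/
def SplitOver (k : Type) [Field k] (X : Scheme) (p : X ⟶ SpecF k) : Prop :=
  ∃ U : X.Opens, (U : Set X).Nonempty ∧ GeometricallyIntegral k U.toScheme (U.ι ≫ p)

/-- A variety over `k`: a geometrically integral separated scheme of finite type
over `k`. -/
def IsVarietyOver (k : Type) [Field k] (X : Scheme) (p : X ⟶ SpecF k) : Prop :=
  LocallyOfFiniteType p ∧ QuasiCompact p ∧ IsSeparated p ∧ GeometricallyIntegral k X p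

/-- `X` is projective over `k`: it admits a closed immersion into some `ℙⁿ_k` over `k`. -/
def IsProjectiveOver (k : Type) [Field k] (X : Scheme) (p : X ⟶ SpecF k) : Prop :=
  ∃ (n : ℕ) (ι : X ⟶ ProjSpace k n), IsClosedImmersion ι ∧ ι ≫ ProjSpace.structMor k n = p

/-- A smooth projective surface (smooth projective variety of dimension 2) over `k`. -/
def IsSmoothProjSurfaceOver (k : Type) [Field k] (X : Scheme) (p : X ⟶ SpecF k) : Prop :=
  IsSmooth p ∧ IsProjectiveOver k X p ∧ IsVarietyOver k X p ∧
    topologicalKrullDim X = 2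

/-- A presentation of the graded quotient `k[xᵢ ; i ∈ σ]/I` (with weights `w`), given by
an abstract graded algebra `B` together with a graded surjection from the weighted
polynomial ring with kernel `I`.  `Proj` of such a presentation is the closed subscheme
of the weighted projective space `ℙ(w)` cut out by `I`. -/
structure GradedQuotientPresentation (k : Type) [CommRing k] (σ : Type) (w : σ → ℕ)
    (I : Ideal (MvPolynomial σ k)) where
  B : Type
  [commRing : CommRing B]
  [alg : Algebra k B]
  grading : ℕ → Submodule k B
  [gradedAlgebra : GradedAlgebra grading]
  proj : MvPolynomial σ k →ₐ[k] B
  surj : Function.Surjective proj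
  ker_eq : RingHom.ker proj.toRingHom = I
  maps_grading : ∀ (n : ℕ) (x : MvPolynomial σ k),
    x ∈ MvPolynomial.weightedHomogeneousSubmodule k w n → proj x ∈ grading n

attribute [instance] GradedQuotientPresentation.commRing GradedQuotientPresentation.alg
  GradedQuotientPresentation.gradedAlgebra

/-- The scheme `Proj (k[xᵢ]/I)` attached to a graded quotient presentation. -/
def GradedQuotientPresentation.scheme {k : Type} [CommRing k] {σ : Type} {w : σ → ℕ}
    {I : Ideal (MvPolynomial σ k)} (P : GradedQuotientPresentation k σ w I) : Scheme :=
  Proj P.grading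

/-- The structure morphism `Proj (k[xᵢ]/I) ⟶ Spec k`. -/
def GradedQuotientPresentation.structMor {k : Type} [CommRing k] {σ : Type} {w : σ → ℕ}
    {I : Ideal (MvPolynomial σ k)} (P : GradedQuotientPresentation k σ w I) :
    P.scheme ⟶ SpecF k :=
  Proj.toSpecZero P.grading ≫ Spec.map (CommRingCat.ofHom (algebraMap k _))

/-- `X` (over `k`) is isomorphic, as a `k`-scheme, to the closed subscheme of the
weighted projective space `ℙ(w)` cut out by the ideal `I`. -/
def IsProjQuotientOver (k : Type) [Field k] {σ : Type} (w : σ → ℕ)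
    (I : Ideal (MvPolynomial σ k)) (X : Scheme) (p : X ⟶ SpecF k) : Prop :=
  ∃ (P : GradedQuotientPresentation k σ w I) (e : X ≅ P.scheme),
    e.hom ≫ P.structMor = p

/-- A scheme `C` over a field `F` is a *plane conic* if it is isomorphic over `F` to the
vanishing scheme in `ℙ²_F` of a nonzero homogeneous form of degree `2`. -/
def IsPlaneConicOver (F : Type) [Field F] (C : Scheme) (pC : C ⟶ SpecF F) : Prop :=
  ∃ q : MvPolynomial (Fin 3) F, q.IsHomogeneous 2 ∧ q ≠ 0 ∧
    IsProjQuotientOver F (fun _ => 1) (Ideal.span {q}) C pC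

/-- The locus of points of `X` at which `π` fails to be smooth.  For a conic fibration
this is exactly the (finite) set of singular points of the singular fibers. -/
def BadLocus {X Y : Scheme} (π : X ⟶ Y) : Set X :=
  { x | ¬ ∃ U : X.Opens, x ∈ U ∧ IsSmooth (U.ι ≫ π) }

/-- A conic fibration on `X` over `k`: a `k`-morphism `π : X ⟶ ℙ¹` all of whose
scheme-theoretic fibers are plane conics over the respective residue fields. -/
def IsConicFibration (k : Type) [Field k] {X : Scheme} (pX : X ⟶ SpecF k)
    (π : X ⟶ P1 k) : Prop :=
  π ≫ ProjSpace.structMor k 1 = pX ∧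
  ∀ y : P1 k, IsPlaneConicOver ((P1 k).residueField y) (fiberAt π y) (fiberStruct π y)

/-- Condition (a): any fiber of `π₁` meets any fiber of `π₂` in a nonempty finite set;
for curves on a projective surface this says exactly that fibers from the two fibrations
have nonzero intersection product. -/
def FibersMeetFinitely {k : Type} [CommRing k] {X : Scheme} (π₁ π₂ : X ⟶ P1 k) : Prop :=
  ∀ p q : P1 k, { x : X | π₁.base x = p ∧ π₂.base x = q }.Nonempty ∧
    { x : X | π₁.base x = p ∧ π₂.base x = q }.Finite

/-- The (rational) point `P₀` lies on a smooth fiber of `π`: the fiber of `π` through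
`P₀` contains no non-smooth point of `π`. -/
def OnSmoothFiber {k : Type} [CommRing k] {X : Scheme} (π : X ⟶ P1 k)
    (P₀ : SpecF k ⟶ X) : Prop :=
  ∀ x : X, (∃ x₀ ∈ Set.range P₀.base, π.base x = π.base x₀) → x ∉ BadLocus π

section Arithmetic

/-- The set of places of a number field `K`: finite places (height-one primes of the
ring of integers) together with the infinite places. -/
def Place (K : Type) [Field K] [NumberField K] : Type :=
  IsDedekindDomain.HeightOneSpectrum (NumberField.RingOfIntegers K) ⊕
    NumberField.InfinitePlace K

/-- The completion `K_v` of `K` at a place `v`. -/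
def Place.Completion {K : Type} [Field K] [NumberField K] : Place K → Type
  | .inl v => v.adicCompletion K
  | .inr v => v.1.Completion

instance {K : Type} [Field K] [NumberField K] (v : Place K) : Field v.Completion := by
  cases v with
  | inl v => exact inferInstanceAs (Field (v.adicCompletion K))
  | inr v => exact inferInstanceAs (Field v.1.Completion)

instance {K : Type} [Field K] [NumberField K] (v : Place K) :
    TopologicalSpace v.Completion := by
  cases v with
  | inl v => exact inferInstanceAs (TopologicalSpace (v.adicCompletion K))
  | inr v => exact inferInstanceAs (TopologicalSpace v.1.Completion)

instance {K : Type} [Field K] [NumberField K] (v : Place K) : Algebra K v.Completion := by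
  cases v with
  | inl v => exact inferInstanceAs (Algebra K (v.adicCompletion K))
  | inr v => exact inferInstanceAs (Algebra K v.1.Completion)

/-- Evaluation of a section `s ∈ Γ(X, U)` at an `A`-point of `X` landing in `U`. -/
def evalAt {A : Type} [CommRing A] {X : Scheme} (f : SpecF A ⟶ X) (U : X.Opens)
    (hU : Set.range f.base ⊆ (U : Set X)) (s : Γ(X, U)) : A :=
  (Scheme.ΓSpecIso (CommRingCat.of A)).hom
    ((IsOpenImmersion.lift U.ι f (by rwa [Scheme.Opens.range_ι])).appTop (U.topIso.inv s))

/-- The topology on the set of `A`-points of a scheme `X`, for a topological ring `A`: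
generated by the conditions "the point lies in the open `U` and the value of the regular
function `s` at it lies in the open `V ⊆ A`". -/
def pointsTopology (A : Type) [CommRing A] [TopologicalSpace A] (X : Scheme) :
    TopologicalSpace (SpecF A ⟶ X) :=
  TopologicalSpace.generateFrom
    { T | ∃ (U : X.Opens) (s : Γ(X, U)) (V : Set A), IsOpen V ∧
        T = { f | ∃ hU : Set.range f.base ⊆ (U : Set X), evalAt f U hU s ∈ V } }

variable (K : Type) [Field K] [NumberField K]

/-- The `K`-rational points of a `K`-scheme. -/
def RatPoints {X : Scheme} (p : X ⟶ SpecF K) : Type :=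
  { f : SpecF K ⟶ X // f ≫ p = 𝟙 (SpecF K) }

/-- The `K_v`-points of a `K`-scheme. -/
def LocPoints (v : Place K) {X : Scheme} (p : X ⟶ SpecF K) : Type :=
  { f : SpecF v.Completion ⟶ X //
      f ≫ p = Spec.map (CommRingCat.ofHom (algebraMap K v.Completion)) }

instance (v : Place K) {X : Scheme} (p : X ⟶ SpecF K) :
    TopologicalSpace (LocPoints K v p) :=
  TopologicalSpace.induced Subtype.val (pointsTopology v.Completion X)

/-- The diagonal map from rational points to the product of local points away from `S`. -/
def diagMap {X : Scheme} (p : X ⟶ SpecF K) (S : Finset (Place K)) :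
    RatPoints K p → ∀ v : { v : Place K // v ∉ S }, LocPoints K v.1 p :=
  fun x v =>
    ⟨Spec.map (CommRingCat.ofHom (algebraMap K (v.1).Completion)) ≫ x.1, by
      rw [Category.assoc, x.2, Category.comp_id]⟩

/-- Weak weak approximation for a scheme `X` over a number field `K`: there is a finite
set `S` of places such that `X(K)` is dense in `∏_{v ∉ S} X(K_v)`. -/
def WeakWeakApproximation {X : Scheme} (p : X ⟶ SpecF K) : Prop :=
  ∃ S : Finset (Place K), DenseRange (diagMap K p S)

/-- A `K`-morphism `f : Y ⟶ X` is arithmetically surjective if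
`f(Y(K_v)) = X(K_v)` for all but finitely many places `v` of `K`. -/
def ArithmeticallySurjective {Y X : Scheme} (f : Y ⟶ X) (p : X ⟶ SpecF K) : Prop :=
  { v : Place K |
      ¬ ∀ x : LocPoints K v p, ∃ y : LocPoints K v (f ≫ p), y.1 ≫ f = x.1 }.Finite

end Arithmetic

section Tower

variable {k : Type} [CommRing k] {X : Scheme}

/-- `π₁` for odd `n` and `π₂` for even `n`. -/
def selPi (π₁ π₂ : X ⟶ P1 k) (n : ℕ) : X ⟶ P1 k := if n % 2 = 1 then π₁ else π₂

/-- The tower of auxiliary varieties `C_n` together with the morphisms `f_n : C_n ⟶ X`: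
`C₀ = {P₀}`, and `C_n = C_{n-1} ×_{π_i ∘ f_{n-1}, ℙ¹, π_i} X` where `i = 1` if `n` is odd
and `i = 2` if `n` is even; `f_n` is the second projection. -/
def tower (π₁ π₂ : X ⟶ P1 k) (P₀ : SpecF k ⟶ X) : ℕ → Σ C : Scheme, C ⟶ X
  | 0 => ⟨SpecF k, P₀⟩
  | (n + 1) =>
    ⟨pullback ((tower π₁ π₂ P₀ n).2 ≫ selPi π₁ π₂ (n + 1)) (selPi π₁ π₂ (n + 1)),
      pullback.snd _ _⟩

/-- The auxiliary variety `C_n`. -/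
def Cn (π₁ π₂ : X ⟶ P1 k) (P₀ : SpecF k ⟶ X) (n : ℕ) : Scheme := (tower π₁ π₂ P₀ n).1

/-- The morphism `f_n : C_n ⟶ X`. -/
def fn (π₁ π₂ : X ⟶ P1 k) (P₀ : SpecF k ⟶ X) (n : ℕ) : Cn π₁ π₂ P₀ n ⟶ X :=
  (tower π₁ π₂ P₀ n).2

/-- The projection `a_n : C_n ⟶ C_{n-1}`. -/
def an (π₁ π₂ : X ⟶ P1 k) (P₀ : SpecF k ⟶ X) (n : ℕ) :
    Cn π₁ π₂ P₀ (n + 1) ⟶ Cn π₁ π₂ P₀ n :=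
  pullback.fst _ _

end Tower

/-- Two schemes over `F` are birational (over `F`) if they contain isomorphic dense open
subschemes, compatibly with the structure morphisms. -/
def BirationalOver (F : Type) [CommRing F] (A : Scheme) (pA : A ⟶ SpecF F)
    (B : Scheme) (pB : B ⟶ SpecF F) : Prop :=
  ∃ (U : A.Opens) (V : B.Opens), Dense (U : Set A) ∧ Dense (V : Set B) ∧
    ∃ e : U.toScheme ≅ V.toScheme, e.hom ≫ V.ι ≫ pB = U.ι ≫ pA

/-- `g : C' ⟶ C` is a desingularization (over `k`): a proper surjective morphism from a
scheme smooth over `k` which is an isomorphism over a dense open subscheme of `C`. -/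
def IsDesingularization (k : Type) [Field k] {C C' : Scheme} (pC : C ⟶ SpecF k)
    (g : C' ⟶ C) : Prop :=
  IsProper g ∧ Function.Surjective g.base ∧ IsSmooth (g ≫ pC) ∧
    ∃ V : C.Opens, Dense (V : Set C) ∧ IsIso (g ∣_ V)

/-- A scheme over `k` is rational if it is birational over `k` to some `ℙⁿ_k`. -/
def IsRationalOver (k : Type) [Field k] (C : Scheme) (pC : C ⟶ SpecF k) : Prop :=
  ∃ n : ℕ, BirationalOver k C pC (ProjSpace k n) (ProjSpace.structMor k n)

section PseudoSplit

/-- The morphism `Spec k̄ ⟶ Spec k`. -/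
def algClosureMor (k : Type) [Field k] : SpecF (AlgebraicClosure k) ⟶ SpecF k :=
  Spec.map (CommRingCat.ofHom (algebraMap k (AlgebraicClosure k)))

/-- The base change `X ×_k k̄` of a `k`-scheme to the algebraic closure. -/
def geomModel (k : Type) [Field k] (X : Scheme) (p : X ⟶ SpecF k) : Scheme :=
  pullback p (algClosureMor k)

/-- The projection `X ×_k k̄ ⟶ X`. -/
def geomModelProj (k : Type) [Field k] (X : Scheme) (p : X ⟶ SpecF k) :
    geomModel k X p ⟶ X :=
  pullback.fst _ _

/-- The structure morphism of `X ×_k k̄` over `k̄`. -/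
def geomModelStruct (k : Type) [Field k] (X : Scheme) (p : X ⟶ SpecF k) :
    geomModel k X p ⟶ SpecF (AlgebraicClosure k) :=
  pullback.snd _ _

/-- The action of an element of `Gal(k̄/k)` on `X ×_k k̄`. -/
def galAut (k : Type) [Field k] (X : Scheme) (p : X ⟶ SpecF k)
    (γ : AlgebraicClosure k ≃ₐ[k] AlgebraicClosure k) :
    geomModel k X p ⟶ geomModel k X p :=
  pullback.map p (algClosureMor k) p (algClosureMor k) (𝟙 X)
    (Spec.map (CommRingCat.ofHom γ.toRingHom)) (𝟙 (SpecF k))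
    (by simp)
    (by
      rw [Category.comp_id, algClosureMor, ← Spec.map_comp]
      congr 1
      ext x
      exact (γ.commutes x).symm)

/-- A multiplicity-one irreducible component of a scheme: an irreducible component whose
generic point has a stalk which is a field (i.e. the component occurs with
multiplicity one). -/
def IsMultOneComponent (Z : Scheme) (T : Set Z) : Prop :=
  T ∈ irreducibleComponents Z ∧
    ∃ ξ : Z, closure {ξ} = T ∧ IsField (Z.presheaf.stalk ξ)

/-- A scheme over a field `k` is *pseudo-split* if each element of `Gal(k̄/k)` fixes some
multiplicity-one irreducible component of `X ×_k k̄`. -/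
def PseudoSplitOver (k : Type) [Field k] (X : Scheme) (p : X ⟶ SpecF k) : Prop :=
  ∀ γ : AlgebraicClosure k ≃ₐ[k] AlgebraicClosure k,
    ∃ T : Set (geomModel k X p), IsMultOneComponent (geomModel k X p) T ∧
      (galAut k X p γ).base '' T = T

/-- `X` (over `k`) contains a pseudo-split `k`-subscheme. -/
def ContainsPseudoSplitSub (k : Type) [Field k] (X : Scheme) (p : X ⟶ SpecF k) : Prop :=
  ∃ (Z : Scheme) (ι : Z ⟶ X), IsImmersion ι ∧ PseudoSplitOver k Z (ι ≫ p)

end PseudoSplit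

section DVR

/-- The canonical ring homomorphism `k ⟶ κ(x)` for a point `x` of a `k`-scheme. -/
def kToResidue {k : Type} [CommRing k] {X : Scheme} (p : X ⟶ SpecF k) (x : X) :
    CommRingCat.of k ⟶ X.residueField x :=
  (Scheme.ΓSpecIso (CommRingCat.of k)).inv ≫ p.appTop ≫ X.evaluation ⊤ x trivial

/-- A commutative ring is a regular local ring: a Noetherian local ring whose maximal
ideal is generated by `dim` elements. -/
def IsRegularLocal (A : Type) [CommRing A] : Prop :=
  IsLocalRing A ∧ IsNoetherianRing A ∧
    ∃ s : Finset A, ((Ideal.span (s : Set A) : Ideal A) : Set A) = { a : A | ¬ IsUnit a } ∧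
      (s.card : WithBot ℕ∞) = ringKrullDim A

/-- A regular scheme: all stalks are regular local rings. -/
def RegularScheme (Z : Scheme) : Prop := ∀ z : Z, IsRegularLocal (Z.presheaf.stalk z)

/-- A normal scheme: all stalks are integrally closed domains. -/
def NormalScheme (Z : Scheme) : Prop :=
  ∀ z : Z, IsDomain (Z.presheaf.stalk z) ∧ IsIntegrallyClosed (Z.presheaf.stalk z)

variable {k : Type} [Field k] {X : Scheme}

/-- `R` is a divisorial discrete valuation ring of the function field `κ(ξ)` (where `ξ`
is the generic point of `X`) over `k`:  `k ⊆ R`, `Frac R = κ(ξ)`, and `R` arises as the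
local ring at a codimension-one point of a normal `k`-variety with function field
(isomorphic to) `κ(ξ)`. -/
def IsDivisorialDVR (p : X ⟶ SpecF k) (ξ : X) (R : Subring (X.residueField ξ)) : Prop :=
  IsGenericPoint ξ Set.univ ∧
  IsDiscreteValuationRing R ∧
  (∀ c : k, kToResidue p ξ c ∈ R) ∧
  (∀ x : X.residueField ξ, ∃ a b : R, b ≠ 0 ∧ (b : X.residueField ξ) * x = a) ∧
  ∃ (W : Scheme) (pW : W ⟶ SpecF k) (ζ : W) (η : W)
    (α : W.residueField ζ ≃+* X.residueField ξ) (h : ζ ⤳ η),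
    IsVarietyOver k W pW ∧ NormalScheme W ∧ IsGenericPoint ζ Set.univ ∧
    ringKrullDim (W.presheaf.stalk η) = 1 ∧
    α.toRingHom.comp (kToResidue pW ζ).hom = (kToResidue p ξ).hom ∧
    R = Subring.map α.toRingHom
      (RingHom.range ((W.presheaf.stalkSpecializes h ≫ W.residue ζ).hom :
        W.presheaf.stalk η →+* W.residueField ζ))

/-- `R ∈ DVR(X)`: the canonical morphism `Spec κ(ξ) ⟶ X` factors through
`c : Spec R ⟶ X`. -/
def CentersOn {ξ : X} (R : Subring (X.residueField ξ)) (c : SpecF R ⟶ X) : Prop :=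
  Spec.map (CommRingCat.ofHom R.subtype) ≫ c = X.fromSpecResidueField ξ

/-- A variety `Y` over the field `FF` has split reduction at the DVR `R ⊆ FF` (with
`Frac R = FF`): some regular integral proper `R`-scheme whose generic fiber is smooth
and birational to `Y` has split special fiber. -/
def HasSplitReductionAt {FF : Type} [Field FF] (R : Subring FF) (Y : Scheme)
    (pY : Y ⟶ SpecF FF) : Prop :=
  ∃ (𝒴 : Scheme) (q : 𝒴 ⟶ SpecF R),
    RegularScheme 𝒴 ∧ IsIntegral 𝒴 ∧ IsProper q ∧
    IsSmooth (pullback.snd q (Spec.map (CommRingCat.ofHom R.subtype))) ∧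
    BirationalOver FF (pullback q (Spec.map (CommRingCat.ofHom R.subtype)))
      (pullback.snd _ _) Y pY ∧
    ∃ (κ' : Type) (iκ : Field κ') (res : R →+* κ'),
      Function.Surjective res ∧ (RingHom.ker res).IsMaximal ∧
      @SplitOver κ' iκ (pullback q (Spec.map (CommRingCat.ofHom res)))
        (pullback.snd _ _)

/-- A morphism `f : Y ⟶ X` has split reduction at `R` if its generic fiber (a scheme
over the function field `κ(ξ)`) does. -/
def MorHasSplitReductionAt {Y : Scheme} (f : Y ⟶ X) (ξ : X)
    (R : Subring (X.residueField ξ)) : Prop :=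
  HasSplitReductionAt R (fiberAt f ξ) (fiberStruct f ξ)

end DVR

/-- A morphism of schemes is flat if all the induced maps on stalks are flat. -/
def FlatMorphism {X Y : Scheme} (f : X ⟶ Y) : Prop :=
  ∀ x : X,
    letI : Algebra (Y.presheaf.stalk (f.base x)) (X.presheaf.stalk x) :=
      (f.stalkMap x).hom.toAlgebra
    Module.Flat (Y.presheaf.stalk (f.base x)) (X.presheaf.stalk x)

/-- A morphism `f : X ⟶ Y` is projective if it factors as a closed immersion into
`ℙⁿ_Y = ℙⁿ_ℤ ×_ℤ Y` for some `n`, followed by the projection. -/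
def ProjectiveMorphism {X Y : Scheme} (f : X ⟶ Y) : Prop :=
  ∃ (n : ℕ) (g : X ⟶ ProjSpace ℤ n),
    IsClosedImmersion
      (pullback.lift g f
        (specZIsTerminal.hom_ext (g ≫ specZIsTerminal.from (ProjSpace ℤ n))
          (f ≫ specZIsTerminal.from Y)) :
        X ⟶ pullback (specZIsTerminal.from (ProjSpace ℤ n)) (specZIsTerminal.from Y))

/-- `C ⊆ X` is an exceptional curve (a `(-1)`-curve): an irreducible closed curve which
can be contracted to a closed point by a proper morphism to a smooth scheme which is an
isomorphism away from that point (Castelnuovo's criterion). -/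
def IsExceptionalCurve (F : Type) [Field F] (Xb : Scheme) (pXb : Xb ⟶ SpecF F)
    (C : Set Xb) : Prop :=
  IsClosed C ∧ IsIrreducible C ∧
  ∃ (Y : Scheme) (g : Xb ⟶ Y) (pY : Y ⟶ SpecF F) (y : Y) (hy : IsClosed ({y} : Set Y)),
    IsSmooth pY ∧ IsProper g ∧ g ≫ pY = pXb ∧
    C = g.base ⁻¹' {y} ∧
    IsIso (g ∣_ ⟨{y}ᶜ, hy.isOpen_compl⟩)

/-- A point of `X ×_k k̄` is an `n`-Eckardt point if it lies on at least `n` distinct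
exceptional curves of `X ×_k k̄`. -/
def IsEckardtPoint (k : Type) [Field k] (X : Scheme) (p : X ⟶ SpecF k) (n : ℕ)
    (P : geomModel k X p) : Prop :=
  ∃ Cs : Finset (Set (geomModel k X p)), n ≤ Cs.card ∧
    ∀ C ∈ Cs, IsExceptionalCurve (AlgebraicClosure k) (geomModel k X p)
      (geomModelStruct k X p) C ∧ P ∈ C

/-- `ν : X̃ ⟶ X` is the blowup of the smooth surface `X` at the closed point `x₀`:
a proper morphism from a smooth `k`-scheme which is an isomorphism away from `x₀`
and whose fiber over `x₀` is `ℙ¹` over `κ(x₀)`. -/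
def IsBlowupAtPoint (k : Type) [Field k] {Xt X : Scheme} (pX : X ⟶ SpecF k)
    (ν : Xt ⟶ X) (x₀ : X) : Prop :=
  IsProper ν ∧ IsSmooth (ν ≫ pX) ∧
  (∃ hcl : IsClosed ({x₀} : Set X), IsIso (ν ∣_ ⟨{x₀}ᶜ, hcl.isOpen_compl⟩)) ∧
  ∃ e : fiberAt ν x₀ ≅ P1 (X.residueField x₀),
    e.hom ≫ ProjSpace.structMor (X.residueField x₀) 1 = fiberStruct ν x₀

/-- A finite field extension of `F`, bundled. -/
structure FiniteExtensionOf (F : Type) [Field F] where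
  carrier : Type
  [field : Field carrier]
  [alg : Algebra F carrier]
  [finite : Module.Finite F carrier]

attribute [instance] FiniteExtensionOf.field FiniteExtensionOf.alg FiniteExtensionOf.finite

/-- Del Pezzo surfaces of degree `1`, `2` or `4`, via their standard models:
degree 1: a smooth sextic hypersurface in `ℙ(1,1,2,3)`;
degree 2: a smooth quartic hypersurface in `ℙ(1,1,1,2)`;
degree 4: a smooth intersection of two quadrics in `ℙ⁴`. -/
def IsDelPezzoOfDegree (k : Type) [Field k] (X : Scheme) (pX : X ⟶ SpecF k) : ℕ → Prop
  | 1 => IsSmoothProjSurfaceOver k X pX ∧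
      ∃ q : MvPolynomial (Fin 4) k,
        q ∈ MvPolynomial.weightedHomogeneousSubmodule k ![1, 1, 2, 3] 6 ∧ q ≠ 0 ∧
        IsProjQuotientOver k ![1, 1, 2, 3] (Ideal.span {q}) X pX
  | 2 => IsSmoothProjSurfaceOver k X pX ∧
      ∃ q : MvPolynomial (Fin 4) k,
        q ∈ MvPolynomial.weightedHomogeneousSubmodule k ![1, 1, 1, 2] 4 ∧ q ≠ 0 ∧
        IsProjQuotientOver k ![1, 1, 1, 2] (Ideal.span {q}) X pX
  | 4 => IsSmoothProjSurfaceOver k X pX ∧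
      ∃ q₁ q₂ : MvPolynomial (Fin 5) k,
        q₁.IsHomogeneous 2 ∧ q₂.IsHomogeneous 2 ∧ LinearIndependent k ![q₁, q₂] ∧
        IsProjQuotientOver k (fun _ => 1) (Ideal.span {q₁, q₂}) X pX
  | _ => False

/-!
Smoothness is stable under base change, so `b` is smooth. The fibre of `b` at `w` is the base
change of the fibre of `φ` at `f w` along `κ(f w) → κ(w)`. Splitness survives any base change
of fields: geometric integrality does because base changes compose, and a nonempty open stays
nonempty because `Spec` of a field extension is surjective. For `f w ∉ S` this applies
directly; for `f w ∈ S` the extension `κ(f w) → κ(w)` factors through `L_{f w}`, over which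
the fibre is already split.
-/

section BaseChange

variable {F F' : Type} [Field F] [Field F'] {X X' : Scheme} {p : X ⟶ SpecF F}
  {p' : X' ⟶ SpecF F'} {g : X' ⟶ X}

lemma GeometricallyIntegral.of_isPullback (i : F →+* F')
    (hpb : IsPullback g p' p (Spec.map (CommRingCat.ofHom i)))
    (h : GeometricallyIntegral F X p) : GeometricallyIntegral F' X' p' := by
  intro K _ j
  have hpaste := (IsPullback.of_hasPullback p' (Spec.map (CommRingCat.ofHom j))).paste_horiz hpb
  rw [← Spec.map_comp, ← CommRingCat.ofHom_comp] at hpaste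
  have : IsIntegral (pullback p (Spec.map (CommRingCat.ofHom (j.comp i)))) := h K _ (j.comp i)
  exact IsIntegral.of_isIso hpaste.isoPullback.inv

lemma surjective_specMap_ofHom (i : F →+* F') :
    Surjective (Spec.map (CommRingCat.ofHom i)) :=
  ⟨fun _ => ⟨Classical.arbitrary _, Subsingleton.elim _ _⟩⟩

lemma SplitOver.of_isPullback (i : F →+* F')
    (hpb : IsPullback g p' p (Spec.map (CommRingCat.ofHom i)))
    (h : SplitOver F X p) : SplitOver F' X' p' := by
  obtain ⟨V, ⟨x, hx⟩, hV⟩ := h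
  have hg : Surjective g := MorphismProperty.of_isPullback hpb.flip (surjective_specMap_ofHom i)
  obtain ⟨y, rfl⟩ := hg.surj x
  exact ⟨g ⁻¹ᵁ V, ⟨y, hx⟩,
    hV.of_isPullback i ((isPullback_morphismRestrict g V).paste_vert hpb)⟩

lemma SplitOver.of_isPullback_of_splitOver_baseChange {L : Type} [Field L]
    (j : F →+* L) (e : L →+* F')
    (hpb : IsPullback g p' p (Spec.map (CommRingCat.ofHom (e.comp j))))
    (h : SplitOver L (pullback p (Spec.map (CommRingCat.ofHom j))) (pullback.snd _ _)) :
    SplitOver F' X' p' := by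
  rw [CommRingCat.ofHom_comp, Spec.map_comp] at hpb
  exact h.of_isPullback e (hpb.of_right' (IsPullback.of_hasPullback _ _))

end BaseChange

lemma isPullback_fiberAt_of_isPullback {X Y X' Y' : Scheme} {g : X' ⟶ X} {φ' : X' ⟶ Y'}
    {φ : X ⟶ Y} {f : Y' ⟶ Y} (h : IsPullback g φ' φ f) (y : Y') :
    ∃ t : fiberAt φ' y ⟶ fiberAt φ (f.base y),
      IsPullback t (fiberStruct φ' y) (fiberStruct φ (f.base y))
        (Spec.map (f.residueFieldMap y)) := by
  have hpaste := (IsPullback.of_hasPullback φ' (Y'.fromSpecResidueField y)).paste_horiz h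
  rw [← Scheme.Hom.SpecMap_residueFieldMap_fromSpecResidueField f y] at hpaste
  exact ⟨_, hpaste.of_right' (IsPullback.of_hasPullback φ (Y.fromSpecResidueField (f.base y)))⟩

theorem smooth_split_fibers_of_cartesian_square_general
    (U U' W W' : Scheme)
    (φ : U ⟶ U') (hφ : IsSmooth φ)
    (f : W' ⟶ U')
    (a : W ⟶ U) (b : W ⟶ W')
    (hsq : IsPullback a b φ f)
    (S : Set U')
    (L : ∀ u : U', u ∈ S → FiniteExtensionOf (U'.residueField u))
    (h1 : ∀ u : U', u ∉ S →
      SplitOver (U'.residueField u) (fiberAt φ u) (fiberStruct φ u))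
    (h2 : ∀ (u : U') (hu : u ∈ S),
      SplitOver (L u hu).carrier
        (pullback (fiberStruct φ u)
          (Spec.map (CommRingCat.ofHom (algebraMap (U'.residueField u) (L u hu).carrier))))
        (pullback.snd _ _))
    (h3 : ∀ (w : W') (hw : f.base w ∈ S),
      ∃ e : (L (f.base w) hw).carrier →+* W'.residueField w,
        e.comp (algebraMap (U'.residueField (f.base w)) (L (f.base w) hw).carrier) =
          (f.residueFieldMap w).hom) :
    IsSmooth b ∧ ∀ w : W',
      SplitOver (W'.residueField w) (fiberAt b w) (fiberStruct b w) := by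
  refine ⟨MorphismProperty.of_isPullback (P := @Smooth) hsq hφ, fun w => ?_⟩
  obtain ⟨_, hfib⟩ := isPullback_fiberAt_of_isPullback hsq w
  by_cases hS : f.base w ∈ S
  · obtain ⟨e, he⟩ := h3 w hS
    rw [← CommRingCat.ofHom_hom (f.residueFieldMap w), ← he] at hfib
    exact (h2 _ hS).of_isPullback_of_splitOver_baseChange _ e hfib
  · exact (h1 _ hS).of_isPullback _ hfib

/-- Lemma 5.2.
Given a Cartesian square of `k`-varieties with `φ : U ⟶ U'` smooth, a subset `S ⊆ U'`
and finite extensions `L_u/κ(u)` for `u ∈ S` such that: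
(i) the fibers of `φ` at points `u ∉ S` are split;
(ii) for `u ∈ S` the fiber `φ⁻¹(u) ×_{κ(u)} L_u` is a split `L_u`-scheme;
(iii) for every `w ∈ W'` with `f(w) ∈ S` there is an embedding of `κ(f(w))`-extensions
`L_{f(w)} ↪ κ(w)`;
then the projection `W ⟶ W'` is smooth with split fibers. -/
theorem smooth_split_fibers_of_cartesian_square
    (k : Type) [Field k] [CharZero k]
    (U U' W W' : Scheme)
    (pU : U ⟶ SpecF k) (pU' : U' ⟶ SpecF k) (pW : W ⟶ SpecF k) (pW' : W' ⟶ SpecF k)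
    (hU : IsVarietyOver k U pU) (hU' : IsVarietyOver k U' pU')
    (hW : IsVarietyOver k W pW) (hW' : IsVarietyOver k W' pW')
    (φ : U ⟶ U') (hφk : φ ≫ pU' = pU) (hφ : IsSmooth φ)
    (f : W' ⟶ U') (hfk : f ≫ pU' = pW')
    (a : W ⟶ U) (b : W ⟶ W') (hb : b ≫ pW' = pW)
    (hsq : IsPullback a b φ f)
    (S : Set U')
    (L : ∀ u : U', u ∈ S → FiniteExtensionOf (U'.residueField u))
    (h1 : ∀ u : U', u ∉ S →
      SplitOver (U'.residueField u) (fiberAt φ u) (fiberStruct φ u))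
    (h2 : ∀ (u : U') (hu : u ∈ S),
      SplitOver (L u hu).carrier
        (pullback (fiberStruct φ u)
          (Spec.map (CommRingCat.ofHom (algebraMap (U'.residueField u) (L u hu).carrier))))
        (pullback.snd _ _))
    (h3 : ∀ (w : W') (hw : f.base w ∈ S),
      ∃ e : (L (f.base w) hw).carrier →+* W'.residueField w,
        e.comp (algebraMap (U'.residueField (f.base w)) (L (f.base w) hw).carrier) =
          (f.residueFieldMap w).hom) :
    IsSmooth b ∧ ∀ w : W',
      SplitOver (W'.residueField w) (fiberAt b w) (fiberStruct b w) :=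
  smooth_split_fibers_of_cartesian_square_general U U' W W' φ hφ f a b hsq S L h1 h2 h3

end Paper
end
end

section
/- Let k be a field and X a k-scheme. If X contains a pseudo-split k-subscheme, then for each element γ of the absolute Galois group Gal(k̄/k) there exists a field extension F/k such that the algebraic closure of k in F is isomorphic, as a k-extension, to the fixed field k̄^⟨γ⟩, and X(F) ≠ ∅. -/
/-!
Common definitions used to formalize the paper
"Weak weak approximation for del Pezzo surfaces of low degree" (arXiv:2111.11409).
-/

open AlgebraicGeometry CategoryTheory CategoryTheory.Limits TopologicalSpace

noncomputable section

namespace Paper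

attribute [local instance] MvPolynomial.gradedAlgebra

end Paper

/-!
A `γ`-stable irreducible component of `Z ×_k k̄` has a `γ`-fixed generic point `ξ`. The action
of `γ` then induces an endomorphism `σ` of `κ(ξ)` which restricts to `γ` on `k̄ ⊆ κ(ξ)` and fixes
the image of `κ(ξ₀)`, where `ξ₀ ∈ Z` is the image of `ξ`. Take `F = κ(ξ)^σ`: the map
`κ(ξ₀) → F` gives an `F`-point of `Z`. Since `k̄` is algebraically closed, every element of `κ(ξ)`
integral over `k` lies in `k̄`, so the algebraic closure of `k` in `F` is `k̄ ∩ F = k̄^⟨γ⟩`.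
-/

theorem IsGenericPoint.apply_eq_of_image_eq {α : Type*} [TopologicalSpace α] [T0Space α]
    {x : α} {S : Set α} (hx : IsGenericPoint x S) {f : α → α} (hf : Continuous f)
    (hS : f '' S = S) : f x = x := by
  have hfx := hx.image hf
  rw [hS, hx.isClosed.closure_eq] at hfx
  exact hfx.eq hx

namespace AlgHom

variable {k K : Type*} [Field k] [Field K] [Algebra k K]

def fixedField (σ : K →ₐ[k] K) : IntermediateField k K where
  toSubalgebra := AlgHom.equalizer σ (AlgHom.id k K)
  inv_mem' x (hx : σ x = x) := show σ x⁻¹ = x⁻¹ by rw [map_inv₀, hx]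

theorem mem_fixedField_iff (σ : K →ₐ[k] K) (x : K) : x ∈ σ.fixedField ↔ σ x = x := Iff.rfl

end AlgHom

theorem IntermediateField.mem_fixedField_zpowers_iff {k L : Type*} [Field k] [Field L]
    [Algebra k L] (γ : L ≃ₐ[k] L) (b : L) :
    b ∈ IntermediateField.fixedField (Subgroup.zpowers γ) ↔ γ b = b :=
  ⟨fun h => (IntermediateField.mem_fixedField_iff _ b).1 h γ (Subgroup.mem_zpowers γ),
    fun h => (IntermediateField.mem_fixedField_iff _ b).2 fun _ hg =>
      Subgroup.zpowers_le.mpr (show γ ∈ MulAction.stabilizer _ b from h) hg⟩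

theorem IsAlgClosed.mem_range_algebraMap_of_isIntegral {L K : Type*} [Field L] [Field K]
    [Algebra L K] [IsAlgClosed L] {x : K} (hx : IsIntegral L x) :
    x ∈ (algebraMap L K).range :=
  minpoly.mem_range_of_degree_eq_one L x
    (IsAlgClosed.degree_eq_one_of_irreducible L (minpoly.irreducible hx))

section GaloisDescent

open IntermediateField

variable {k L K : Type*} [Field k] [Field L] [Field K] [Algebra k L] [Algebra k K] [Algebra L K]

theorem algebraMap_mem_fixedField_of_mem_fixedField_zpowers {γ : L ≃ₐ[k] L} {σ : K →ₐ[k] K}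
    (hσ : ∀ a : L, σ (algebraMap L K a) = algebraMap L K (γ a)) {b : L}
    (hb : b ∈ fixedField (Subgroup.zpowers γ)) : algebraMap L K b ∈ σ.fixedField := by
  rw [AlgHom.mem_fixedField_iff, hσ, (mem_fixedField_zpowers_iff γ b).1 hb]

variable [IsScalarTower k L K] [Algebra.IsIntegral k L]

def fixedFieldZpowersToIntegralClosure (γ : L ≃ₐ[k] L) (σ : K →ₐ[k] K)
    (hσ : ∀ a : L, σ (algebraMap L K a) = algebraMap L K (γ a)) :
    fixedField (Subgroup.zpowers γ) →ₐ[k] integralClosure k σ.fixedField :=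
  let ι : fixedField (Subgroup.zpowers γ) →ₐ[k] σ.fixedField.toSubalgebra :=
    ((IsScalarTower.toAlgHom k L K).comp (fixedField _).val).codRestrict _
      fun b => algebraMap_mem_fixedField_of_mem_fixedField_zpowers hσ b.2
  ι.codRestrict _ fun b => (Algebra.IsIntegral.isIntegral b).map ι

theorem bijective_fixedFieldZpowersToIntegralClosure [IsAlgClosed L] (γ : L ≃ₐ[k] L)
    (σ : K →ₐ[k] K) (hσ : ∀ a : L, σ (algebraMap L K a) = algebraMap L K (γ a)) :
    Function.Bijective (fixedFieldZpowersToIntegralClosure γ σ hσ) := by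
  refine ⟨RingHom.injective (fixedFieldZpowersToIntegralClosure γ σ hσ).toRingHom, ?_⟩
  rintro ⟨⟨a, ha⟩, ha_int⟩
  have : IsIntegral L a :=
    ((isIntegral_algHom_iff σ.fixedField.val Subtype.val_injective).2 ha_int).tower_top
  obtain ⟨b, rfl⟩ := IsAlgClosed.mem_range_algebraMap_of_isIntegral this
  have hb : γ b = b := FaithfulSMul.algebraMap_injective L K (by rw [← hσ]; exact ha)
  exact ⟨⟨b, (mem_fixedField_zpowers_iff γ b).2 hb⟩, rfl⟩

noncomputable def fixedFieldZpowersEquivIntegralClosure [IsAlgClosed L] (γ : L ≃ₐ[k] L)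
    (σ : K →ₐ[k] K) (hσ : ∀ a : L, σ (algebraMap L K a) = algebraMap L K (γ a)) :
    fixedField (Subgroup.zpowers γ) ≃ₐ[k] integralClosure k σ.fixedField :=
  AlgEquiv.ofBijective _ (bijective_fixedFieldZpowersToIntegralClosure γ σ hσ)

end GaloisDescent

namespace AlgebraicGeometry

namespace Scheme

variable {X Y : Scheme}

def Hom.residueFieldEndo (f : X ⟶ X) {x : X} (hx : f x = x) :
    X.residueField x ⟶ X.residueField x :=
  (X.residueFieldCongr hx.symm).hom ≫ f.residueFieldMap x

lemma Hom.residueFieldMap_comp_residueFieldEndo {f : X ⟶ X} {g : X ⟶ Y} (hfg : f ≫ g = g)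
    {x : X} (hx : f x = x) :
    g.residueFieldMap x ≫ f.residueFieldEndo hx = g.residueFieldMap x := by
  conv_rhs => rw [Hom.residueFieldMap_congr hfg.symm, residueFieldMap_comp]
  rw [Hom.residueFieldEndo, Hom.residueFieldMap_congr'_assoc]
  rfl

lemma Γevaluation_comp_residueFieldCongr {x y : X} (h : x = y) :
    X.Γevaluation x ≫ (X.residueFieldCongr h).hom = X.Γevaluation y := by
  subst h
  simp

lemma Γevaluation_comp_residueFieldEndo (f : X ⟶ X) {x : X} (hx : f x = x) :
    X.Γevaluation x ≫ f.residueFieldEndo hx = f.appTop ≫ X.Γevaluation x := by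
  rw [Hom.residueFieldEndo, ← Γevaluation_naturality, ← Category.assoc,
    Γevaluation_comp_residueFieldCongr]

end Scheme

lemma Spec.fromSpecResidueField_eq (R : CommRingCat) (x : Spec R) :
    (Spec R).fromSpecResidueField x =
      Spec.map ((Scheme.ΓSpecIso R).inv ≫ (Spec R).Γevaluation x) := by
  rw [← Scheme.Spec.map_residueFieldIso_inv_eq_fromSpecResidueField, ← Spec.map_comp,
    Scheme.Spec.algebraMap_residueFieldIso_inv]
  rfl

end AlgebraicGeometry

namespace Paper

section

variable {R : Type} [CommRing R] {X Y : Scheme}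

lemma kToResidue_comp (g : X ⟶ Y) (p : Y ⟶ SpecF R) (x : X) :
    kToResidue (g ≫ p) x = kToResidue p (g x) ≫ g.residueFieldMap x := by
  simp only [kToResidue, Scheme.Hom.comp_appTop, Category.assoc]
  rw [← Scheme.Γevaluation_naturality]

lemma kToResidue_comp_SpecMap {S : Type} [CommRing S] (w : X ⟶ SpecF S)
    (φ : CommRingCat.of R ⟶ CommRingCat.of S) (x : X) :
    kToResidue (w ≫ Spec.map φ) x = φ ≫ kToResidue w x := by
  simp only [kToResidue, Scheme.Hom.comp_appTop, Category.assoc,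
    Scheme.ΓSpecIso_inv_naturality_assoc]

lemma kToResidue_comp_residueFieldEndo {f : X ⟶ X} {w : X ⟶ SpecF R}
    {φ : CommRingCat.of R ⟶ CommRingCat.of R} (hfw : f ≫ w = w ≫ Spec.map φ) {x : X}
    (hx : f x = x) :
    kToResidue w x ≫ f.residueFieldEndo hx = φ ≫ kToResidue w x := by
  rw [← kToResidue_comp_SpecMap, ← hfw, kToResidue, kToResidue, Category.assoc, Category.assoc,
    Scheme.Γevaluation_comp_residueFieldEndo, Scheme.Hom.comp_appTop, Category.assoc]

lemma fromSpecResidueField_comp (p : Y ⟶ SpecF R) (y : Y) :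
    Y.fromSpecResidueField y ≫ p = Spec.map (kToResidue p y) := by
  rw [← Scheme.Hom.SpecMap_residueFieldMap_fromSpecResidueField, Spec.fromSpecResidueField_eq,
    ← Spec.map_comp, Category.assoc, Scheme.Γevaluation_naturality]
  rfl

end

section GeometricModel

variable {k : Type} [Field k] {Z : Scheme} (p : Z ⟶ SpecF k)
  (γ : AlgebraicClosure k ≃ₐ[k] AlgebraicClosure k)

lemma galAut_comp_geomModelProj : galAut k Z p γ ≫ geomModelProj k Z p = geomModelProj k Z p :=
  (pullback.lift_fst _ _ _).trans (Category.comp_id _)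

lemma galAut_comp_geomModelStruct :
    galAut k Z p γ ≫ geomModelStruct k Z p =
      geomModelStruct k Z p ≫ Spec.map (CommRingCat.ofHom γ.toRingHom) :=
  pullback.lift_snd _ _ _

lemma geomModelProj_comp : geomModelProj k Z p ≫ p = geomModelStruct k Z p ≫ algClosureMor k :=
  pullback.condition

theorem PseudoSplitOver.exists_galAut_apply_eq {p : Z ⟶ SpecF k} (hZ : PseudoSplitOver k Z p)
    (γ : AlgebraicClosure k ≃ₐ[k] AlgebraicClosure k) :
    ∃ ξ : geomModel k Z p, galAut k Z p γ ξ = ξ := by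
  obtain ⟨T, ⟨-, ξ, hξ, -⟩, hT⟩ := hZ γ
  exact ⟨ξ, IsGenericPoint.apply_eq_of_image_eq hξ (galAut k Z p γ).continuous hT⟩

theorem exists_point_of_galAut_apply_eq {ξ : geomModel k Z p} (hξ : galAut k Z p γ ξ = ξ) :
    ∃ (F : Type) (_ : Field F) (_ : Algebra k F),
      Nonempty ((integralClosure k F) ≃ₐ[k]
        (IntermediateField.fixedField (Subgroup.zpowers γ))) ∧
      ∃ x : SpecF F ⟶ Z, x ≫ p = Spec.map (CommRingCat.ofHom (algebraMap k F)) := by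
  set ρ := (geomModelProj k Z p).residueFieldMap ξ
  set j := kToResidue (geomModelStruct k Z p) ξ
  set τ := (galAut k Z p γ).residueFieldEndo hξ
  let : Algebra (AlgebraicClosure k) _ := j.hom.toAlgebra
  let : Algebra k _ := (kToResidue p (geomModelProj k Z p ξ) ≫ ρ).hom.toAlgebra
  have hρτ (a) : τ (ρ a) = ρ a := ConcreteCategory.congr_hom
    (Scheme.Hom.residueFieldMap_comp_residueFieldEndo (galAut_comp_geomModelProj p γ) hξ) a
  have hjτ (a) : τ (j a) = j (γ a) := ConcreteCategory.congr_hom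
    (kToResidue_comp_residueFieldEndo (galAut_comp_geomModelStruct p γ) hξ) a
  have hk : kToResidue p (geomModelProj k Z p ξ) ≫ ρ =
      CommRingCat.ofHom (algebraMap k (AlgebraicClosure k)) ≫ j := by
    rw [← kToResidue_comp, geomModelProj_comp, algClosureMor, kToResidue_comp_SpecMap]
  have : IsScalarTower k (AlgebraicClosure k) ((geomModel k Z p).residueField ξ) :=
    .of_algebraMap_eq' congr(($hk).hom)
  let σ : _ →ₐ[k] _ := { τ.hom with commutes' c := hρτ (kToResidue p _ c) }
  refine ⟨σ.fixedField, inferInstance, inferInstance,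
    ⟨(fixedFieldZpowersEquivIntegralClosure γ σ hjτ).symm⟩,
    Spec.map (CommRingCat.ofHom (ρ.hom.codRestrict σ.fixedField hρτ)) ≫
      Z.fromSpecResidueField _, ?_⟩
  rw [Category.assoc, fromSpecResidueField_comp, ← Spec.map_comp]
  rfl

end GeometricModel

/-- Lemma 6.7.
Let `X` be a `k`-scheme containing a pseudo-split `k`-subscheme.  Then for each `γ` in
the absolute Galois group `Gal(k̄/k)` there is a field extension `F/k` whose algebraic
closure of `k` inside `F` is isomorphic, as a `k`-extension, to the fixed field
`k̄^⟨γ⟩`, and such that `X(F) ≠ ∅`. -/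
theorem point_in_fixed_field_extension_of_pseudoSplit
    (k : Type) [Field k]
    (X : Scheme) (pX : X ⟶ SpecF k)
    (hX : ContainsPseudoSplitSub k X pX) :
    ∀ γ : AlgebraicClosure k ≃ₐ[k] AlgebraicClosure k,
      ∃ (F : Type) (_ : Field F) (_ : Algebra k F),
        Nonempty ((integralClosure k F) ≃ₐ[k]
          (IntermediateField.fixedField (Subgroup.zpowers γ))) ∧
        ∃ x : SpecF F ⟶ X, x ≫ pX = Spec.map (CommRingCat.ofHom (algebraMap k F)) := by
  intro γ
  obtain ⟨Z, ι, -, hZ⟩ := hX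
  obtain ⟨ξ, hξ⟩ := hZ.exists_galAut_apply_eq γ
  obtain ⟨F, _, _, hF, x, hx⟩ := exists_point_of_galAut_apply_eq (ι ≫ pX) γ hξ
  exact ⟨F, _, _, hF, x ≫ ι, by rw [Category.assoc, hx]⟩

end Paper
end
end
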